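/- With probability at least 1 − δ, the doubly robust gradient satisfies ‖G_DR‖₂ ≤ √(2·E[‖G(X_1, f̂(X_1)) − E[G(X_1, f̂(X_1))]‖₂²] / ((m+n)·δ)) + √(2·E[‖D_1 − E[D_1]‖₂²] / (n·δ)), where D_1 = G(X_1, Y_1) − G(X_1, f̂(X_1)). -/

import Mathlib

/-!
`G_DR` is the sum of two centred sample means: that of the `m + n` plug-in gradients
`G(Xᵢ, f̂(Xᵢ))` and that of the `n` corrections `Dᵢ`, since the two centring constants add up to
`E[G(X₁, Y₁)] = 0`. In a Hilbert space the cross terms of the second moment of a sum of pairwise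
independent centred vectors vanish, so a sample mean over `k` points deviates from its expectation
by more than `√(σ² / (k p))` with probability at most `p` (Chebyshev). Take `p = δ / 2` for each
mean and use a union bound.
-/

open MeasureTheory ProbabilityTheory Finset
open scoped RealInnerProductSpace

theorem Fin.card_filter_le_val (m n : ℕ) : #{i : Fin (m + n) | m ≤ (i : ℕ)} = n := by
  have h := card_filter_add_card_filter_not (s := univ) fun i : Fin (m + n) => (i : ℕ) < m
  simp only [Fin.card_filter_val_lt, not_lt, card_univ, Fintype.card_fin] at h
  omega

noncomputable def sampleMean {ι Ω E : Type*} [AddCommGroup E] [Module ℝ E] (s : Finset ι)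
    (Z : ι → Ω → E) (ω : Ω) : E :=
  (#s : ℝ)⁻¹ • ∑ i ∈ s, Z i ω

section Concentration

variable {Ω E : Type*} [MeasurableSpace Ω] {μ : Measure Ω} [NormedAddCommGroup E]

theorem measure_sqrt_integral_norm_sq_div_lt_norm_le [IsFiniteMeasure μ] {F : Ω → E}
    (hF : MemLp F 2 μ) {p : ℝ} (hp : 0 < p) :
    μ {ω | √((∫ ω', ‖F ω'‖ ^ 2 ∂μ) / p) < ‖F ω‖} ≤ ENNReal.ofReal p := by
  set V := ∫ ω, ‖F ω‖ ^ 2 ∂μ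
  have hint : Integrable (fun ω => ‖F ω‖ ^ 2) μ := hF.norm.integrable_sq
  obtain hV | hV := (integral_nonneg fun ω => sq_nonneg ‖F ω‖ : 0 ≤ V).eq_or_lt
  · have hF0 : ∀ᵐ ω ∂μ, ‖F ω‖ ^ 2 = 0 :=
      (integral_eq_zero_iff_of_nonneg (fun ω => sq_nonneg _) hint).mp hV.symm
    refine le_of_eq_of_le (measure_eq_zero_iff_ae_notMem.mpr ?_) bot_le
    filter_upwards [hF0] with ω hω
    rw [show V = 0 from hV.symm, zero_div, Real.sqrt_zero, not_lt]
    exact (pow_eq_zero_iff two_ne_zero).mp hω |>.le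
  · have hVp : 0 < V / p := div_pos hV hp
    have hsub : {ω | √(V / p) < ‖F ω‖} ⊆ {ω | V / p ≤ ‖F ω‖ ^ 2} := fun ω hω =>
      (Real.lt_sq_of_sqrt_lt hω).le
    have hmarkov : V / p * μ.real {ω | V / p ≤ ‖F ω‖ ^ 2} ≤ V :=
      mul_meas_ge_le_integral_of_nonneg (.of_forall fun ω => sq_nonneg ‖F ω‖) hint (V / p)
    refine (measure_mono hsub).trans <|
      (ENNReal.le_ofReal_iff_toReal_le (measure_ne_top _ _) hp.le).mpr ?_
    rwa [← measureReal_def, ← mul_le_mul_iff_right₀ hVp, div_mul_cancel₀ _ hp.ne']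

theorem ofReal_one_sub_le_measure_norm_add_le [IsProbabilityMeasure μ] {A B : Ω → E}
    {t₁ t₂ p₁ p₂ : ℝ} (hp₁ : 0 ≤ p₁) (hp₂ : 0 ≤ p₂)
    (hA : μ {ω | t₁ < ‖A ω‖} ≤ ENNReal.ofReal p₁)
    (hB : μ {ω | t₂ < ‖B ω‖} ≤ ENNReal.ofReal p₂) :
    ENNReal.ofReal (1 - (p₁ + p₂)) ≤ μ {ω | ‖A ω + B ω‖ ≤ t₁ + t₂} := by
  set S := {ω | ‖A ω + B ω‖ ≤ t₁ + t₂}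
  have hcompl : Sᶜ ⊆ {ω | t₁ < ‖A ω‖} ∪ {ω | t₂ < ‖B ω‖} := by
    intro ω hω
    by_contra h
    simp only [S, Set.mem_compl_iff, Set.mem_ofPred_eq, not_le, Set.mem_union, not_or] at hω h
    linarith [norm_add_le (A ω) (B ω)]
  rw [ENNReal.ofReal_sub _ (add_nonneg hp₁ hp₂), ENNReal.ofReal_one, tsub_le_iff_right,
    ENNReal.ofReal_add hp₁ hp₂]
  calc 1 = μ (S ∪ Sᶜ) := by rw [Set.union_compl_self, measure_univ]
    _ ≤ μ S + μ Sᶜ := measure_union_le S Sᶜ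
    _ ≤ μ S + (ENNReal.ofReal p₁ + ENNReal.ofReal p₂) := by
      gcongr
      exact (measure_mono hcompl).trans ((measure_union_le _ _).trans (add_le_add hA hB))

end Concentration

section InnerProductSpace

variable {Ω E ι : Type*} [MeasurableSpace Ω] {μ : Measure Ω}
  [NormedAddCommGroup E] [InnerProductSpace ℝ E]

theorem MeasureTheory.MemLp.integrable_inner {f g : Ω → E} (hf : MemLp f 2 μ)
    (hg : MemLp g 2 μ) : Integrable (fun ω => ⟪f ω, g ω⟫) μ :=
  (hf.norm.integrable_mul hg.norm).mono (hf.1.inner hg.1)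
    (.of_forall fun ω => by simpa using abs_real_inner_le_norm (f ω) (g ω))

variable [CompleteSpace E] [MeasurableSpace E] [BorelSpace E]

theorem integral_norm_sq_sum_of_pairwise_indepFun [IsFiniteMeasure μ] {W : ι → Ω → E}
    {s : Finset ι} (hW : ∀ i ∈ s, MemLp (W i) 2 μ)
    (hindep : (s : Set ι).Pairwise fun i j => IndepFun (W i) (W j) μ)
    (hmean : ∀ i ∈ s, ∫ ω, W i ω ∂μ = 0) :
    ∫ ω, ‖∑ i ∈ s, W i ω‖ ^ 2 ∂μ = ∑ i ∈ s, ∫ ω, ‖W i ω‖ ^ 2 ∂μ := by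
  classical
  have hinner : ∀ i ∈ s, ∀ j ∈ s, ∫ ω, ⟪W i ω, W j ω⟫ ∂μ =
      if i = j then ∫ ω, ‖W i ω‖ ^ 2 ∂μ else 0 := by
    intro i hi j hj
    split_ifs with hij
    · simp_rw [hij, real_inner_self_eq_norm_sq]
    · calc ∫ ω, ⟪W i ω, W j ω⟫ ∂μ = ∫ ω, innerSL ℝ (W i ω) (W j ω) ∂μ := rfl
        _ = innerSL ℝ (∫ ω, W i ω ∂μ) (∫ ω, W j ω ∂μ) :=
          (hindep hi hj hij).integral_bilin ((hW i hi).integrable one_le_two)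
            ((hW j hj).integrable one_le_two) (innerSL ℝ)
        _ = 0 := by simp [hmean i hi]
  have hint : ∀ i ∈ s, ∀ j ∈ s, Integrable (fun ω => ⟪W i ω, W j ω⟫) μ :=
    fun i hi j hj => (hW i hi).integrable_inner (hW j hj)
  calc ∫ ω, ‖∑ i ∈ s, W i ω‖ ^ 2 ∂μ = ∫ ω, ∑ i ∈ s, ∑ j ∈ s, ⟪W i ω, W j ω⟫ ∂μ := by
        simp_rw [← real_inner_self_eq_norm_sq, sum_inner, inner_sum]
    _ = ∑ i ∈ s, ∑ j ∈ s, ∫ ω, ⟪W i ω, W j ω⟫ ∂μ := by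
        rw [integral_finsetSum _ fun i hi => integrable_finsetSum _ (hint i hi)]
        exact sum_congr rfl fun i hi => integral_finsetSum _ (hint i hi)
    _ = ∑ i ∈ s, ∫ ω, ‖W i ω‖ ^ 2 ∂μ := by
        rw [sum_congr rfl fun i hi => sum_congr rfl (hinner i hi)]
        simp

variable [IsProbabilityMeasure μ] {Z : ι → Ω → E} {s : Finset ι} {i₀ : ι}

theorem integral_norm_sq_sampleMean_sub (hs : s.Nonempty) (hZ : MemLp (Z i₀) 2 μ)
    (hindep : (s : Set ι).Pairwise fun i j => IndepFun (Z i) (Z j) μ)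
    (hid : ∀ i ∈ s, IdentDistrib (Z i) (Z i₀) μ μ) :
    ∫ ω, ‖sampleMean s Z ω - ∫ ω', Z i₀ ω' ∂μ‖ ^ 2 ∂μ
      = (∫ ω, ‖Z i₀ ω - ∫ ω', Z i₀ ω' ∂μ‖ ^ 2 ∂μ) / #s := by
  set a := ∫ ω, Z i₀ ω ∂μ
  have hcenter : Measurable fun v : E => v - a := measurable_id.sub_const a
  have hid' : ∀ i ∈ s, IdentDistrib (fun ω => Z i ω - a) (fun ω => Z i₀ ω - a) μ μ :=
    fun i hi => (hid i hi).comp hcenter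
  have hmean : ∀ i ∈ s, ∫ ω, Z i ω - a ∂μ = 0 := fun i hi => by
    rw [(hid' i hi).integral_eq, integral_sub (hZ.integrable one_le_two) (integrable_const a)]
    simp [a]
  have hsum := integral_norm_sq_sum_of_pairwise_indepFun
    (fun i hi => (hid' i hi).symm.memLp_snd (hZ.sub (memLp_const a)))
    (fun i hi j hj hij => (hindep hi hj hij).comp hcenter hcenter) hmean
  have hvar : ∀ i ∈ s, ∫ ω, ‖Z i ω - a‖ ^ 2 ∂μ = ∫ ω, ‖Z i₀ ω - a‖ ^ 2 ∂μ := fun i hi =>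
    ((hid' i hi).comp (continuous_norm.pow 2).measurable).integral_eq
  have hcard : (#s : ℝ) ≠ 0 := Nat.cast_ne_zero.mpr hs.card_pos.ne'
  have hcentered : ∀ ω, sampleMean s Z ω - a = (#s : ℝ)⁻¹ • ∑ i ∈ s, (Z i ω - a) := by
    intro ω
    rw [sampleMean, sum_sub_distrib, sum_const, smul_sub, ← Nat.cast_smul_eq_nsmul ℝ, smul_smul,
      inv_mul_cancel₀ hcard, one_smul]
  simp_rw [hcentered, norm_smul, mul_pow, integral_const_mul, hsum, sum_congr rfl hvar,
    sum_const, nsmul_eq_mul, Real.norm_eq_abs, sq_abs]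
  field_simp

theorem measure_sampleMean_deviation_le (hs : s.Nonempty) (hZ : MemLp (Z i₀) 2 μ)
    (hindep : (s : Set ι).Pairwise fun i j => IndepFun (Z i) (Z j) μ)
    (hid : ∀ i ∈ s, IdentDistrib (Z i) (Z i₀) μ μ) {p : ℝ} (hp : 0 < p) :
    μ {ω | √((∫ ω, ‖Z i₀ ω - ∫ ω', Z i₀ ω' ∂μ‖ ^ 2 ∂μ) / (#s * p))
        < ‖sampleMean s Z ω - ∫ ω', Z i₀ ω' ∂μ‖} ≤ ENNReal.ofReal p := by
  have hdev : MemLp (fun ω => sampleMean s Z ω - ∫ ω', Z i₀ ω' ∂μ) 2 μ :=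
    ((memLp_finsetSum s fun i hi => (hid i hi).symm.memLp_snd hZ).const_smul _).sub
      (memLp_const _)
  have h := measure_sqrt_integral_norm_sq_div_lt_norm_le hdev hp
  rwa [integral_norm_sq_sampleMean_sub hs hZ hindep hid, div_div] at h

end InnerProductSpace

/-- With probability at least `1 − δ`, the doubly robust gradient satisfies
`‖G_DR‖₂ ≤ √(2·E[‖G(X₁,f̂(X₁)) − E[G(X₁,f̂(X₁))]‖²/((m+n)δ))
  + √(2·E[‖D₁ − E[D₁]‖²]/(nδ))` where `D₁ = G(X₁,Y₁) − G(X₁,f̂(X₁))`. -/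
theorem doubly_robust_gradient_bound
    {Ω : Type*} [MeasurableSpace Ω] (μ : Measure Ω) [IsProbabilityMeasure μ]
    {𝒳 𝒴 : Type*} [MeasurableSpace 𝒳] [MeasurableSpace 𝒴]
    (m n d : ℕ) (hn : 0 < n)
    (δ : ℝ) (hδ0 : 0 < δ)
    (X : Fin (m + n) → Ω → 𝒳) (Y : Fin (m + n) → Ω → 𝒴)
    (h_indep : iIndepFun
      (fun i ω => (X i ω, Y i ω)) μ)
    (h_ident : ∀ i : Fin (m + n),
      IdentDistrib (fun ω => (X i ω, Y i ω))
        (fun ω => (X ⟨0, by omega⟩ ω, Y ⟨0, by omega⟩ ω)) μ μ)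
    (f : 𝒳 → 𝒴) (hf : Measurable f)
    (G : 𝒳 × 𝒴 → EuclideanSpace ℝ (Fin d)) (hG : Measurable G)
    (hGf2 : MemLp (fun ω => G (X ⟨0, by omega⟩ ω, f (X ⟨0, by omega⟩ ω))) 2 μ)
    (hGY2 : MemLp (fun ω => G (X ⟨0, by omega⟩ ω, Y ⟨0, by omega⟩ ω)) 2 μ)
    (hopt : (∫ ω, G (X ⟨0, by omega⟩ ω, Y ⟨0, by omega⟩ ω) ∂μ) = 0) :
    ENNReal.ofReal (1 - δ) ≤
      μ {ω | ‖((m + n : ℝ))⁻¹ • (∑ i : Fin (m + n), G (X i ω, f (X i ω)))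
          + ((n : ℝ))⁻¹ • ∑ i ∈ Finset.univ.filter (fun i : Fin (m + n) => m ≤ (i : ℕ)),
              (G (X i ω, Y i ω) - G (X i ω, f (X i ω)))‖
        ≤ Real.sqrt (2 * (∫ ω, ‖G (X ⟨0, by omega⟩ ω, f (X ⟨0, by omega⟩ ω))
              - ∫ ω', G (X ⟨0, by omega⟩ ω', f (X ⟨0, by omega⟩ ω')) ∂μ‖ ^ 2 ∂μ)
            / ((m + n : ℝ) * δ))
          + Real.sqrt (2 * (∫ ω, ‖(G (X ⟨0, by omega⟩ ω, Y ⟨0, by omega⟩ ω)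
                - G (X ⟨0, by omega⟩ ω, f (X ⟨0, by omega⟩ ω)))
              - ∫ ω', (G (X ⟨0, by omega⟩ ω', Y ⟨0, by omega⟩ ω')
                - G (X ⟨0, by omega⟩ ω', f (X ⟨0, by omega⟩ ω'))) ∂μ‖ ^ 2 ∂μ)
            / ((n : ℝ) * δ))} := by
  have hGf : Measurable fun p : 𝒳 × 𝒴 => G (p.1, f p.1) :=
    hG.comp (measurable_fst.prodMk (hf.comp measurable_fst))
  have hD : Measurable fun p : 𝒳 × 𝒴 => G p - G (p.1, f p.1) := hG.sub hGf
  have hplugin := measure_sampleMean_deviation_le (Z := fun i ω => G (X i ω, f (X i ω)))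
    ⟨⟨0, by omega⟩, mem_univ _⟩ hGf2 (fun i _ j _ hij => (h_indep.indepFun hij).comp hGf hGf)
    (fun i _ => (h_ident i).comp hGf) (half_pos hδ0)
  have hcorrection := measure_sampleMean_deviation_le
    (Z := fun i ω => G (X i ω, Y i ω) - G (X i ω, f (X i ω)))
    (s := {i : Fin (m + n) | m ≤ (i : ℕ)}) ⟨⟨m, by omega⟩, by simp⟩ (hGY2.sub hGf2)
    (fun i _ j _ hij => (h_indep.indepFun hij).comp hD hD)
    (fun i _ => (h_ident i).comp hD) (half_pos hδ0)
  have hmean := integral_sub (hGY2.integrable one_le_two) (hGf2.integrable one_le_two)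
  rw [hopt, zero_sub] at hmean
  have key := ofReal_one_sub_le_measure_norm_add_le (half_pos hδ0).le (half_pos hδ0).le
    hplugin hcorrection
  simp only [sampleMean] at key
  rw [add_halves, card_univ, Fintype.card_fin, Fin.card_filter_le_val] at key
  convert key using 4
  have hhalf : ∀ N σ : ℝ, 2 * σ / (N * δ) = σ / (N * (δ / 2)) := fun N σ => by ring
  rw [hmean, sub_neg_eq_add, sub_add_add_cancel, hhalf, hhalf, Nat.cast_add]
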